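/- The family D_n of derangements of [n], viewed as a family of n-element subsets of [n]×[n], is (n/12, n/4)-spread: for every set A ⊂ [n]×[n] with |A| ≤ n/4, the family D_n(A) is (n/12)-spread. -/

import Mathlib

/-- The graph of a permutation `σ` of `[n]`, i.e. the set
`{(i, σ i) : i ∈ [n]} ⊆ [n] × [n]`. -/
def permGraph {n : ℕ} (σ : Equiv.Perm (Fin n)) : Finset (Fin n × Fin n) :=
  Finset.univ.image fun i => (i, σ i)

/-- For a family `F` of subsets of `[n] × [n]` and a set `X`,
`F(X) := {F \ X : F ∈ F, X ⊆ F}`. -/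
def restrictAt {α : Type*} [DecidableEq α] (F : Finset (Finset α)) (X : Finset α) :
    Finset (Finset α) :=
  (F.filter fun A => X ⊆ A).image fun A => A \ X

/-- A family `G` is `r`-spread if `|G(Y)| ≤ r^{-|Y|}·|G|` for every set `Y`. -/
def IsSpread {α : Type*} [DecidableEq α] (r : ℝ) (F : Finset (Finset α)) : Prop :=
  ∀ Y : Finset α, ((restrictAt F Y).card : ℝ) ≤ r ^ (-(Y.card : ℤ)) * F.card

open Finset Equiv Nat

section Auxiliary


-- (m+1)^m ≤ 3 * m^m, via (1+1/m)^m ≤ e < 3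
lemma succ_pow_le_three_mul (m : ℕ) : (m + 1) ^ m ≤ 3 * m ^ m := by
  rcases Nat.eq_zero_or_pos m with rfl | hm
  · norm_num
  have hmR : (0 : ℝ) < m := by exact_mod_cast hm
  have key : ((m : ℝ) + 1) ^ m ≤ 3 * (m : ℝ) ^ m := by
    have h1 : ((m : ℝ) + 1) = (1 + 1 / m) * m := by field_simp
    have h2 : (1 + 1 / (m : ℝ)) ^ m ≤ Real.exp 1 := by
      have := Real.add_one_le_exp (1 / (m : ℝ))
      calc (1 + 1 / (m : ℝ)) ^ m ≤ (Real.exp (1 / m)) ^ m := by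
            apply pow_le_pow_left₀ (by positivity) (by linarith)
        _ = Real.exp (1 / m * m) := by rw [← Real.exp_nat_mul]; ring_nf
        _ = Real.exp 1 := by rw [div_mul_cancel₀]; exact hmR.ne'
    have h3 : Real.exp 1 ≤ 3 := by
      have := Real.exp_one_lt_d9; linarith
    calc ((m : ℝ) + 1) ^ m = (1 + 1 / m) ^ m * m ^ m := by
          rw [h1, mul_pow]
      _ ≤ 3 * (m : ℝ) ^ m := by
          apply mul_le_mul_of_nonneg_right (h2.trans h3) (by positivity)
  exact_mod_cast key

lemma pow_self_le_three_pow_mul_factorial (m : ℕ) : m ^ m ≤ 3 ^ m * m ! := by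
  induction m with
  | zero => simp
  | succ m ih =>
    calc (m + 1) ^ (m + 1) = (m + 1) ^ m * (m + 1) := by ring
      _ ≤ 3 * m ^ m * (m + 1) := by
          exact Nat.mul_le_mul_right _ (succ_pow_le_three_mul m)
      _ ≤ 3 * (3 ^ m * m !) * (m + 1) := by
          exact Nat.mul_le_mul_right _ (Nat.mul_le_mul_left _ ih)
      _ = 3 ^ (m + 1) * (m + 1)! := by
          rw [Nat.factorial_succ]; ring

-- Case 1: y in the "increasing" range
lemma claimA : ∀ y m : ℕ, 1 ≤ y → y ≤ m → m ≤ 9 * (m - y) + 9 →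
    3 * m ^ y ≤ 9 ^ y * m.descFactorial y := by
  intro y
  induction y with
  | zero => intro m h; omega
  | succ y ih =>
    intro m _ hym hcond
    rcases Nat.eq_zero_or_pos y with rfl | hy
    · simp [Nat.descFactorial]; omega
    · have hym' : y ≤ m := by omega
      have hcond' : m - (y+1) + 1 = m - y := by omega
      have hmle : m ≤ 9 * (m - y) := by omega
      have IH := ih m hy hym' (by omega)
      calc 3 * m ^ (y + 1) = 3 * m ^ y * m := by ring
        _ ≤ 9 ^ y * m.descFactorial y * m := Nat.mul_le_mul_right _ IH
        _ ≤ 9 ^ y * m.descFactorial y * (9 * (m - y)) :=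
            Nat.mul_le_mul_left _ hmle
        _ = 9 ^ (y + 1) * ((m - y) * m.descFactorial y) := by ring
        _ = 9 ^ (y + 1) * m.descFactorial (y + 1) := by
            rw [Nat.descFactorial_succ]

-- Case 2: downward from y = m
lemma claimB : ∀ d m : ℕ, 1 ≤ m → 9 * d ≤ m → d ≤ m →
    3 * m ^ (m - d) ≤ 9 ^ (m - d) * m.descFactorial (m - d) := by
  intro d
  induction d with
  | zero =>
    intro m hm _ _
    simp only [Nat.sub_zero, Nat.descFactorial_self]
    calc 3 * m ^ m ≤ 3 * (3 ^ m * m !) :=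
          Nat.mul_le_mul_left _ (pow_self_le_three_pow_mul_factorial m)
      _ ≤ 9 ^ m * m ! := by
          have h9 : 3 * 3 ^ m ≤ 9 ^ m := by
            calc 3 * 3 ^ m ≤ 3 ^ m * 3 ^ m := by
                  exact Nat.mul_le_mul_right _ (by
                    calc 3 = 3 ^ 1 := by norm_num
                      _ ≤ 3 ^ m := Nat.pow_le_pow_right (by norm_num) hm)
              _ = 9 ^ m := by rw [← Nat.mul_pow]
          calc 3 * (3 ^ m * m !) = 3 * 3 ^ m * m ! := by ring
            _ ≤ 9 ^ m * m ! := Nat.mul_le_mul_right _ h9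
  | succ d ih =>
    intro m hm h9d hdm
    have h9d' : 9 * d ≤ m := by omega
    have IH := ih m hm h9d' (by omega)
    have hkey : m - d = (m - (d + 1)) + 1 := by omega
    have hsub : m - (m - (d+1)) = d + 1 := by omega
    rw [hkey] at IH
    rw [Nat.descFactorial_succ, hsub] at IH
    -- IH : 3 * m ^ (m - (d+1) + 1) ≤ 9 ^ (m - (d+1) + 1) * ((d+1) * desc (m-(d+1)))
    have expand : 3 * m ^ (m - (d+1) + 1) = 3 * m ^ (m - (d+1)) * m := by ring
    have h1 : 3 * m ^ (m - (d+1)) * (9 * (d+1)) ≤ 3 * m ^ (m - (d+1)) * m :=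
      Nat.mul_le_mul_left _ (by omega)
    have h2 : 3 * m ^ (m - (d+1)) * (9 * (d+1)) ≤
        9 ^ (m - (d+1) + 1) * ((d+1) * m.descFactorial (m - (d+1))) := by
      calc 3 * m ^ (m - (d+1)) * (9 * (d+1)) ≤ 3 * m ^ (m - (d+1)) * m := h1
        _ = 3 * m ^ (m - (d+1) + 1) := by ring
        _ ≤ _ := IH
    have h3 : 9 ^ (m - (d+1) + 1) * ((d+1) * m.descFactorial (m - (d+1)))
        = (9 ^ (m - (d+1)) * m.descFactorial (m - (d+1))) * (9 * (d+1)) := by ring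
    rw [h3] at h2
    have h4 : 3 * m ^ (m - (d+1)) * (9 * (d+1))
        = (3 * m ^ (m - (d+1))) * (9 * (d+1)) := by ring
    rw [h4] at h2
    exact Nat.le_of_mul_le_mul_right h2 (by omega)

lemma claimK {y m : ℕ} (h1 : 1 ≤ y) (h2 : y ≤ m) :
    3 * m ^ y ≤ 9 ^ y * m.descFactorial y := by
  by_cases hc : m ≤ 9 * (m - y) + 9
  · exact claimA y m h1 h2 hc
  · have h9 : 9 * (m - y) ≤ m := by omega
    have hB := claimB (m - y) m (by omega) h9 (by omega)
    have hy : m - (m - y) = y := by omega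
    rwa [hy] at hB

lemma claimN {n y m : ℕ} (h4 : 3 * n ≤ 4 * m) (h1 : 1 ≤ y) (h2 : y ≤ m) :
    3 * n ^ y ≤ 12 ^ y * m.descFactorial y := by
  have hK := claimK h1 h2
  -- 3^y * (3 n^y) = 3 (3n)^y ≤ 3 (4m)^y = 4^y * (3 m^y) ≤ 4^y 9^y desc = 3^y 12^y desc
  have step1 : 3 * (3 * n) ^ y ≤ 3 * (4 * m) ^ y :=
    Nat.mul_le_mul_left _ (Nat.pow_le_pow_left h4 y)
  have e1 : 3 * (3 * n) ^ y = 3 ^ y * (3 * n ^ y) := by rw [Nat.mul_pow]; ring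
  have e2 : 3 * (4 * m) ^ y = 4 ^ y * (3 * m ^ y) := by rw [Nat.mul_pow]; ring
  have step2 : 4 ^ y * (3 * m ^ y) ≤ 4 ^ y * (9 ^ y * m.descFactorial y) :=
    Nat.mul_le_mul_left _ hK
  have e3 : 4 ^ y * (9 ^ y * m.descFactorial y) = 3 ^ y * (12 ^ y * m.descFactorial y) := by
    rw [show (12:ℕ) ^ y = 4 ^ y * 3 ^ y by rw [← Nat.mul_pow],
        show (9:ℕ) ^ y = 3 ^ y * 3 ^ y by rw [← Nat.mul_pow]]
    ring
  have : 3 ^ y * (3 * n ^ y) ≤ 3 ^ y * (12 ^ y * m.descFactorial y) := by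
    rw [← e1, ← e3]; exact le_trans step1 (by rw [e2]; exact step2)
  exact Nat.le_of_mul_le_mul_left this (Nat.pow_pos (n := y) (by norm_num))

lemma factorial_le_three_mul_numDerangements {m : ℕ} (hm : 2 ≤ m) :
    m ! ≤ 3 * numDerangements m := by
  obtain ⟨j, rfl⟩ : ∃ j, m = j + 2 := ⟨m - 2, by omega⟩
  clear hm
  induction j using Nat.strong_induction_on with
  | _ j ih =>
    match j with
    | 0 => simp [numDerangements]
    | 1 => simp [numDerangements]; rfl
    | (k + 2) =>
      have h1 := ih k (by omega)
      have h2 := ih (k + 1) (by omega)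
      have hrec : numDerangements (k + 4) =
          (k + 3) * (numDerangements (k + 2) + numDerangements (k + 3)) := by
        have := numDerangements_add_two (k + 2)
        convert this using 2
      calc (k + 4)! = (k + 4) * (k + 3)! := Nat.factorial_succ _
        _ = (k + 3) * (k + 2)! + (k + 3) * (k+3)! := by
            rw [show (k+3)! = (k+3) * (k+2)! from Nat.factorial_succ _]; ring
        _ ≤ (k + 3) * (3 * numDerangements (k+2)) + (k + 3) * (3 * numDerangements (k+3)) :=
            Nat.add_le_add (Nat.mul_le_mul_left _ h1) (Nat.mul_le_mul_left _ h2)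
        _ = 3 * numDerangements (k + 4) := by rw [hrec]; ring

lemma mem_permGraph {n : ℕ} {σ : Equiv.Perm (Fin n)} {p : Fin n × Fin n} :
    p ∈ permGraph σ ↔ σ p.1 = p.2 := by
  constructor
  · rintro hp
    simp only [permGraph, mem_image, mem_univ, true_and] at hp
    obtain ⟨i, hi⟩ := hp
    rw [← hi]
  · intro h
    simp only [permGraph, mem_image, mem_univ, true_and]
    exact ⟨p.1, by rw [h]⟩

lemma permGraph_injective {n : ℕ} : Function.Injective (permGraph (n := n)) := by
  intro σ τ h
  apply Equiv.ext
  intro i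
  have : (i, σ i) ∈ permGraph τ := by rw [← h]; exact mem_permGraph.mpr rfl
  exact (mem_permGraph.mp this).symm

/-- number of derangements whose graph contains `S` -/
def derCnt (n : ℕ) (S : Finset (Fin n × Fin n)) : ℕ :=
  (Finset.univ.filter fun σ : Equiv.Perm (Fin n) =>
    (∀ i, σ i ≠ i) ∧ S ⊆ permGraph σ).card

lemma card_filter_subset_eq (n : ℕ) (S : Finset (Fin n × Fin n)) :
    (((Finset.univ.filter fun σ : Equiv.Perm (Fin n) => ∀ i, σ i ≠ i).image
      permGraph).filter fun B => S ⊆ B).card = derCnt n S := by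
  rw [Finset.filter_image]
  rw [Finset.card_image_of_injective _ permGraph_injective]
  rw [Finset.filter_filter]
  rfl

lemma card_restrictAt_eq (n : ℕ) (A : Finset (Fin n × Fin n)) :
    (restrictAt ((Finset.univ.filter fun σ : Equiv.Perm (Fin n) => ∀ i, σ i ≠ i).image
      permGraph) A).card = derCnt n A := by
  rw [restrictAt, ← card_filter_subset_eq n A]
  apply Finset.card_image_of_injOn
  intro B hB B' hB' h
  simp only [coe_filter, Set.mem_setOf_eq] at hB hB'
  have h' : B \ A = B' \ A := h
  have : B \ A ∪ A = B' \ A ∪ A := by rw [h']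
  rwa [Finset.sdiff_union_of_subset hB.2, Finset.sdiff_union_of_subset hB'.2] at this

lemma derCnt_le_factorial {n : ℕ} {S : Finset (Fin n × Fin n)} {σ₀ : Equiv.Perm (Fin n)}
    (h0 : S ⊆ permGraph σ₀) : derCnt n S ≤ (n - S.card)! := by
  classical
  set K := S.image Prod.fst with hK
  set C := S.image Prod.snd with hC
  have hfst : Set.InjOn Prod.fst (S : Set (Fin n × Fin n)) := by
    intro p hp q hq h
    have hp' := mem_permGraph.mp (h0 hp)
    have hq' := mem_permGraph.mp (h0 hq)
    exact Prod.ext h (by rw [← hp', ← hq', h])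
  have hsnd : Set.InjOn Prod.snd (S : Set (Fin n × Fin n)) := by
    intro p hp q hq h
    have hp' := mem_permGraph.mp (h0 hp)
    have hq' := mem_permGraph.mp (h0 hq)
    have : p.1 = q.1 := σ₀.injective (by rw [hp', hq', h])
    exact Prod.ext this h
  have hKcard : K.card = S.card := Finset.card_image_of_injOn hfst
  have hCcard : C.card = S.card := Finset.card_image_of_injOn hsnd
  have hKc : (Kᶜ).card = n - S.card := by
    rw [Finset.card_compl, hKcard]; simp
  have hCc : (Cᶜ).card = n - S.card := by
    rw [Finset.card_compl, hCcard]; simp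
  have key : ∀ (σ : Equiv.Perm (Fin n)), S ⊆ permGraph σ → ∀ i : Fin n, i ∈ Kᶜ → σ i ∈ Cᶜ := by
    intro σ hσ i hi
    rw [Finset.mem_compl] at hi ⊢
    intro hmem
    rw [hC, Finset.mem_image] at hmem
    obtain ⟨q, hqS, hq2⟩ := hmem
    have hg : σ q.1 = q.2 := mem_permGraph.mp (hσ hqS)
    have hq1 : q.1 = i := σ.injective (by rw [hg, hq2])
    exact hi (by rw [hK]; exact Finset.mem_image.mpr ⟨q, hqS, hq1⟩)
  let Φ : {σ : Equiv.Perm (Fin n) // (∀ i, σ i ≠ i) ∧ S ⊆ permGraph σ} → (↥(Kᶜ) ↪ ↥(Cᶜ)) :=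
    fun σ => ⟨fun i => ⟨σ.val i.val, key σ.val σ.prop.2 i.val i.prop⟩,
      fun i j h => Subtype.ext (σ.val.injective (congrArg Subtype.val h))⟩
  have hΦ : Function.Injective Φ := by
    intro σ τ h
    apply Subtype.ext; apply Equiv.ext; intro i
    by_cases hi : i ∈ K
    · rw [hK] at hi
      obtain ⟨q, hq, hq1⟩ := Finset.mem_image.mp hi
      have h1 : σ.val q.1 = q.2 := mem_permGraph.mp (σ.prop.2 hq)
      have h2 : τ.val q.1 = q.2 := mem_permGraph.mp (τ.prop.2 hq)
      rw [← hq1, h1, h2]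
    · have hic : i ∈ Kᶜ := Finset.mem_compl.mpr hi
      have := congrArg (fun (e : ↥(Kᶜ) ↪ ↥(Cᶜ)) => ((e ⟨i, hic⟩ : ↥(Cᶜ)) : Fin n)) h
      exact this
  calc derCnt n S = Fintype.card {σ : Equiv.Perm (Fin n) // (∀ i, σ i ≠ i) ∧ S ⊆ permGraph σ} :=
        (Fintype.card_subtype _).symm
    _ ≤ Fintype.card (↥(Kᶜ) ↪ ↥(Cᶜ)) := Fintype.card_le_of_injective Φ hΦ
    _ = (n - S.card)! := by
        rw [Fintype.card_embedding_eq, Fintype.card_coe, Fintype.card_coe, hKc, hCc,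
          Nat.descFactorial_self]

lemma exists_perm_extend {α : Type*} [Fintype α] [DecidableEq α] (s : Finset α) (f : α → α)
    (hf : Set.InjOn f (s : Set α)) : ∃ π : Equiv.Perm α, ∀ x ∈ s, π x = f x := by
  classical
  set t := s.image f with ht
  have hcard : t.card = s.card := Finset.card_image_of_injOn hf
  have hcc : (sᶜ).card = (tᶜ).card := by rw [Finset.card_compl, Finset.card_compl, hcard]
  have e := Finset.equivOfCardEq hcc
  set g : α → α := fun x => if h : x ∈ s then f x else (e ⟨x, Finset.mem_compl.mpr h⟩ : α)
    with hgdef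
  have hmemt : ∀ x (h : x ∈ s), g x ∈ t := by
    intro x h
    simp only [hgdef, dif_pos h]
    exact Finset.mem_image.mpr ⟨x, h, rfl⟩
  have hmemtc : ∀ x (h : x ∉ s), g x ∈ tᶜ := by
    intro x h
    simp only [hgdef, dif_neg h]
    exact (e ⟨x, Finset.mem_compl.mpr h⟩).prop
  have hinj : Function.Injective g := by
    intro x y hxy
    by_cases hx : x ∈ s <;> by_cases hy : y ∈ s
    · apply hf hx hy
      simpa only [hgdef, dif_pos hx, dif_pos hy] using hxy
    · exfalso
      have h1 := hmemt x hx
      have h2 := hmemtc y hy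
      rw [hxy] at h1
      exact (Finset.mem_compl.mp h2) h1
    · exfalso
      have h1 := hmemt y hy
      have h2 := hmemtc x hx
      rw [← hxy] at h1
      exact (Finset.mem_compl.mp h2) h1
    · have : (e ⟨x, Finset.mem_compl.mpr hx⟩ : α) = (e ⟨y, Finset.mem_compl.mpr hy⟩ : α) := by
        simpa only [hgdef, dif_neg hx, dif_neg hy] using hxy
      have := e.injective (Subtype.ext this)
      exact congrArg Subtype.val this
  refine ⟨Equiv.ofBijective g (Finite.injective_iff_bijective.mp hinj), ?_⟩
  intro x hx
  show g x = f x
  simp only [hgdef, dif_pos hx]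

lemma numDerangements_le_derCnt {n : ℕ} {A : Finset (Fin n × Fin n)} {σ₀ : Equiv.Perm (Fin n)}
    (hder : ∀ i, σ₀ i ≠ i) (h0 : A ⊆ permGraph σ₀) :
    numDerangements (n - A.card) ≤ derCnt n A := by
  classical
  set K := A.image Prod.fst with hK
  have hfst : Set.InjOn Prod.fst (A : Set (Fin n × Fin n)) := by
    intro p hp q hq h
    have hp' := mem_permGraph.mp (h0 hp)
    have hq' := mem_permGraph.mp (h0 hq)
    exact Prod.ext h (by rw [← hp', ← hq', h])
  have hKcard : K.card = A.card := Finset.card_image_of_injOn hfst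
  have hRcard : (Kᶜ).card = n - A.card := by rw [Finset.card_compl, hKcard]; simp
  -- build the partial-injection extension g on ↥(Kᶜ)
  set s : Finset ↥(Kᶜ) := Finset.univ.filter (fun x : ↥(Kᶜ) => σ₀⁻¹ (x : Fin n) ∈ Kᶜ) with hs
  set f : ↥(Kᶜ) → ↥(Kᶜ) := fun x =>
    if h : σ₀⁻¹ (x : Fin n) ∈ Kᶜ then ⟨σ₀⁻¹ (x : Fin n), h⟩ else x with hf
  have hinj : Set.InjOn f (s : Set ↥(Kᶜ)) := by
    intro x hx y hy hxy
    simp only [hs, Finset.coe_filter, Set.mem_setOf_eq] at hx hy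
    rw [hf] at hxy
    simp only [dif_pos hx.2, dif_pos hy.2] at hxy
    have := congrArg Subtype.val hxy
    simp only at this
    exact Subtype.ext ((σ₀⁻¹).injective this)
  obtain ⟨g, hg⟩ := exists_perm_extend s f hinj
  have hgprop : ∀ (x : ↥(Kᶜ)) (h : σ₀⁻¹ (x : Fin n) ∈ Kᶜ),
      ((g x : ↥(Kᶜ)) : Fin n) = σ₀⁻¹ (x : Fin n) := by
    intro x h
    have hxs : x ∈ s := Finset.mem_filter.mpr ⟨Finset.mem_univ _, h⟩
    rw [hg x hxs, hf]
    simp only [dif_pos h]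
  -- the map from derangements of ↥(Kᶜ)
  have factder : ∀ (d : Equiv.Perm ↥(Kᶜ)), (∀ x, d x ≠ x) →
      (∀ i, (σ₀ * Equiv.Perm.ofSubtype (g * d)) i ≠ i) := by
    intro d hd i
    by_cases hi : i ∈ Kᶜ
    · rw [Equiv.Perm.mul_apply, Equiv.Perm.ofSubtype_apply_of_mem _ hi]
      intro hcontra
      have h2 : (((g * d) ⟨i, hi⟩ : ↥(Kᶜ)) : Fin n) = σ₀⁻¹ i := by
        apply σ₀.injective
        rw [Equiv.Perm.inv_def, Equiv.apply_symm_apply]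
        exact hcontra
      have hmem : σ₀⁻¹ i ∈ Kᶜ := h2 ▸ ((g * d) ⟨i, hi⟩).prop
      have h3 : ((g ⟨i, hi⟩ : ↥(Kᶜ)) : Fin n) = σ₀⁻¹ i := hgprop ⟨i, hi⟩ hmem
      have h4 : g (d ⟨i, hi⟩) = g ⟨i, hi⟩ := Subtype.ext (by
        rw [h3]; exact h2)
      exact hd ⟨i, hi⟩ (g.injective h4)
    · rw [Equiv.Perm.mul_apply, Equiv.Perm.ofSubtype_apply_of_not_mem _ hi]
      exact hder i
  have factsub : ∀ (d : Equiv.Perm ↥(Kᶜ)), A ⊆ permGraph (σ₀ * Equiv.Perm.ofSubtype (g * d)) := by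
    intro d p hp
    have hp1K : p.1 ∈ K := Finset.mem_image.mpr ⟨p, hp, rfl⟩
    have hp1R : p.1 ∉ Kᶜ := by simp [hp1K]
    rw [mem_permGraph, Equiv.Perm.mul_apply, Equiv.Perm.ofSubtype_apply_of_not_mem _ hp1R]
    exact mem_permGraph.mp (h0 hp)
  let Ψ : ↥(derangements ↥(Kᶜ)) →
      {σ : Equiv.Perm (Fin n) // (∀ i, σ i ≠ i) ∧ A ⊆ permGraph σ} :=
    fun d => ⟨σ₀ * Equiv.Perm.ofSubtype (g * d.val), factder d.val d.prop, factsub d.val⟩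
  have hΨ : Function.Injective Ψ := by
    intro d d' h
    have h1 : σ₀ * Equiv.Perm.ofSubtype (g * d.val) = σ₀ * Equiv.Perm.ofSubtype (g * d'.val) :=
      congrArg Subtype.val h
    have h2 := mul_left_cancel h1
    apply Subtype.ext; apply Equiv.ext; intro x
    have h3 : Equiv.Perm.ofSubtype (g * d.val) (x : Fin n)
        = Equiv.Perm.ofSubtype (g * d'.val) (x : Fin n) := by rw [h2]
    rw [Equiv.Perm.ofSubtype_apply_of_mem _ x.prop,
        Equiv.Perm.ofSubtype_apply_of_mem _ x.prop] at h3
    have h4 : (g * d.val) ⟨(x : Fin n), x.prop⟩ = (g * d'.val) ⟨(x : Fin n), x.prop⟩ :=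
      Subtype.ext h3
    have h5 := g.injective h4
    simpa using h5
  calc numDerangements (n - A.card) = Fintype.card ↥(derangements ↥(Kᶜ)) := by
        rw [card_derangements_eq_numDerangements, Fintype.card_coe, hRcard]
    _ ≤ Fintype.card {σ : Equiv.Perm (Fin n) // (∀ i, σ i ≠ i) ∧ A ⊆ permGraph σ} :=
        Fintype.card_le_of_injective Ψ hΨ
    _ = derCnt n A := Fintype.card_subtype _

lemma card_restrict_restrict_le (n : ℕ) (A Y : Finset (Fin n × Fin n)) :
    (restrictAt (restrictAt ((Finset.univ.filter fun σ : Equiv.Perm (Fin n) =>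
      ∀ i, σ i ≠ i).image permGraph) A) Y).card ≤ derCnt n (A ∪ Y) := by
  classical
  set D := (Finset.univ.filter fun σ : Equiv.Perm (Fin n) => ∀ i, σ i ≠ i).image permGraph
    with hD
  calc (restrictAt (restrictAt D A) Y).card
      ≤ ((restrictAt D A).filter fun B => Y ⊆ B).card := Finset.card_image_le
    _ ≤ ((D.filter fun B => A ∪ Y ⊆ B).image fun B => B \ A).card := by
        apply Finset.card_le_card
        intro B' hB'
        rw [Finset.mem_filter] at hB'
        obtain ⟨hB'mem, hYB'⟩ := hB'
        rw [restrictAt, Finset.mem_image] at hB'mem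
        obtain ⟨B, hBmem, rfl⟩ := hB'mem
        rw [Finset.mem_filter] at hBmem
        refine Finset.mem_image.mpr ⟨B, Finset.mem_filter.mpr ⟨hBmem.1, ?_⟩, rfl⟩
        exact Finset.union_subset hBmem.2 (hYB'.trans Finset.sdiff_subset)
    _ ≤ ((D.filter fun B => A ∪ Y ⊆ B)).card := Finset.card_image_le
    _ = derCnt n (A ∪ Y) := card_filter_subset_eq n (A ∪ Y)

end Auxiliary

/-- **Lemma 10 of the paper.** The family `D_n` of derangements of `[n]`,
viewed as a family of `n`-element subsets of `[n] × [n]`, is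
`(n/12, n/4)`-spread: for every `A ⊆ [n] × [n]` with `|A| ≤ n/4`, the family
`D_n(A)` is `(n/12)`-spread. -/
theorem derangements_spread {n : ℕ} :
    ∀ A : Finset (Fin n × Fin n), (A.card : ℝ) ≤ (n : ℝ) / 4 →
      IsSpread ((n : ℝ) / 12)
        (restrictAt ((Finset.univ.filter fun σ : Equiv.Perm (Fin n) =>
          ∀ i, σ i ≠ i).image permGraph) A) := by
  intro A hA Y
  classical
  set D := (Finset.univ.filter fun σ : Equiv.Perm (Fin n) => ∀ i, σ i ≠ i).image permGraph
    with hD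
  set F := restrictAt D A with hF
  rcases Finset.eq_empty_or_nonempty (restrictAt F Y) with hemp | hne
  · rw [hemp]
    simp only [Finset.card_empty, Nat.cast_zero]
    have h1 : (0:ℝ) ≤ ((n:ℝ)/12) ^ (-(Y.card:ℤ)) := zpow_nonneg (by positivity) _
    exact mul_nonneg h1 (Nat.cast_nonneg _)
  · obtain ⟨B', hB'⟩ := hne
    rw [restrictAt, Finset.mem_image] at hB'
    obtain ⟨B'', hB''mem, rfl⟩ := hB'
    rw [Finset.mem_filter] at hB''mem
    obtain ⟨hB''F, hYB''⟩ := hB''mem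
    rw [hF, restrictAt, Finset.mem_image] at hB''F
    obtain ⟨B, hBmem, rfl⟩ := hB''F
    rw [Finset.mem_filter] at hBmem
    obtain ⟨hBD, hAB⟩ := hBmem
    rw [hD, Finset.mem_image] at hBD
    obtain ⟨σ₀, hσ₀mem, rfl⟩ := hBD
    rw [Finset.mem_filter] at hσ₀mem
    have hder : ∀ i, σ₀ i ≠ i := hσ₀mem.2
    have hdisj : Disjoint Y A :=
      Finset.disjoint_of_subset_left hYB'' sdiff_disjoint
    have hAY : A ∪ Y ⊆ permGraph σ₀ :=
      Finset.union_subset hAB (hYB''.trans Finset.sdiff_subset)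
    rcases Finset.eq_empty_or_nonempty Y with rfl | hYne
    · have hres : restrictAt F ∅ = F := by
        rw [restrictAt]
        simp
      rw [hres]
      simp
    · set a := A.card with ha
      set y := Y.card with hy
      have hy1 : 1 ≤ y := Finset.card_pos.mpr hYne
      have hcardAY : (A ∪ Y).card = a + y := by
        rw [Finset.card_union_of_disjoint hdisj.symm]
      -- a + y ≤ n
      have hfstAY : Set.InjOn Prod.fst ((A ∪ Y : Finset (Fin n × Fin n)) :
          Set (Fin n × Fin n)) := by
        intro p hp q hq h
        have hp' := mem_permGraph.mp (hAY (Finset.mem_coe.mp hp))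
        have hq' := mem_permGraph.mp (hAY (Finset.mem_coe.mp hq))
        exact Prod.ext h (by rw [← hp', ← hq', h])
      have hsn : a + y ≤ n := by
        have himg : ((A ∪ Y).image Prod.fst).card = (A ∪ Y).card :=
          Finset.card_image_of_injOn hfstAY
        have hle : ((A ∪ Y).image Prod.fst).card ≤ n := by
          calc ((A ∪ Y).image Prod.fst).card ≤ (Finset.univ : Finset (Fin n)).card :=
                Finset.card_le_univ _
            _ = n := by simp
        omega
      -- n ≥ 2
      obtain ⟨p, hp⟩ := hYne
      have hnontriv : Nontrivial (Fin n) := ⟨⟨σ₀ p.1, p.1, hder p.1⟩⟩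
      have hn2 : 2 ≤ n := by
        have := Fintype.one_lt_card (α := Fin n)
        simp at this; omega
      have h4a : 4 * a ≤ n := by
        have : (4 * a : ℝ) ≤ n := by
          rw [ha]
          linarith
        exact_mod_cast this
      set m := n - a with hm
      have hym : y ≤ m := by omega
      have hm2 : 2 ≤ m := by omega
      have h3n4m : 3 * n ≤ 4 * m := by omega
      -- natural number chain
      have hUB : derCnt n (A ∪ Y) ≤ (n - (a + y))! := by
        have := derCnt_le_factorial hAY
        rwa [hcardAY] at this
      have hLB : numDerangements m ≤ derCnt n A := numDerangements_le_derCnt hder hAB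
      have hD3 : m ! ≤ 3 * numDerangements m := factorial_le_three_mul_numDerangements hm2
      have hNum : 3 * n ^ y ≤ 12 ^ y * m.descFactorial y := claimN h3n4m hy1 hym
      have hfac : (m - y)! * m.descFactorial y = m ! := Nat.factorial_mul_descFactorial hym
      have hns : n - (a + y) = m - y := by omega
      have keyNat : derCnt n (A ∪ Y) * n ^ y ≤ 12 ^ y * derCnt n A := by
        have chain : 3 * (derCnt n (A ∪ Y) * n ^ y) ≤ 3 * (12 ^ y * derCnt n A) := by
          calc 3 * (derCnt n (A ∪ Y) * n ^ y) = derCnt n (A ∪ Y) * (3 * n ^ y) := by ring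
            _ ≤ (m - y)! * (3 * n ^ y) := by
                apply Nat.mul_le_mul_right
                rw [← hns]
                exact hUB
            _ ≤ (m - y)! * (12 ^ y * m.descFactorial y) := Nat.mul_le_mul_left _ hNum
            _ = 12 ^ y * ((m - y)! * m.descFactorial y) := by ring
            _ = 12 ^ y * m ! := by rw [hfac]
            _ ≤ 12 ^ y * (3 * numDerangements m) := Nat.mul_le_mul_left _ hD3
            _ ≤ 12 ^ y * (3 * derCnt n A) := by
                apply Nat.mul_le_mul_left
                exact Nat.mul_le_mul_left _ hLB
            _ = 3 * (12 ^ y * derCnt n A) := by ring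
        exact Nat.le_of_mul_le_mul_left chain (by norm_num)
      -- pass to the reals
      have hFcard : (F.card : ℝ) = (derCnt n A : ℝ) := by
        rw [hF, hD]
        exact_mod_cast congrArg Nat.cast (card_restrictAt_eq n A)
      have hLHS : ((restrictAt F Y).card : ℝ) ≤ (derCnt n (A ∪ Y) : ℝ) := by
        have := card_restrict_restrict_le n A Y
        rw [hF, hD]
        exact_mod_cast this
      have hnR : (0:ℝ) < (n:ℝ) ^ y := by
        have : (0:ℝ) < (n:ℝ) := by exact_mod_cast (by omega : 0 < n)
        positivity
      have hRHS : (derCnt n (A ∪ Y) : ℝ) ≤ ((n:ℝ)/12) ^ (-(y:ℤ)) * (derCnt n A : ℝ) := by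
        rw [zpow_neg, zpow_natCast, div_pow, inv_div, div_mul_eq_mul_div, le_div_iff₀ hnR]
        calc (derCnt n (A ∪ Y) : ℝ) * (n:ℝ) ^ y = ((derCnt n (A ∪ Y) * n ^ y : ℕ) : ℝ) := by
              push_cast; ring
          _ ≤ ((12 ^ y * derCnt n A : ℕ) : ℝ) := by exact_mod_cast keyNat
          _ = 12 ^ y * (derCnt n A : ℝ) := by push_cast; ring
      calc ((restrictAt F Y).card : ℝ) ≤ (derCnt n (A ∪ Y) : ℝ) := hLHS
        _ ≤ ((n:ℝ)/12) ^ (-(y:ℤ)) * (derCnt n A : ℝ) := hRHS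
        _ = ((n:ℝ)/12) ^ (-(Y.card:ℤ)) * (F.card : ℝ) := by rw [hFcard, hy]
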